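/- Let R be a ring and M a right R-module, W = End_R(M). (1) If M is a progenerator, then for every anti-endomorphism α of W the form b_α is right regular and its corresponding anti-endomorphism is α; every right regular general bilinear form b on M is similar to b_{α(b)}; and two right regular general bilinear forms on M are similar if and only if they have the same corresponding anti-endomorphism. Consequently b ↦ α(b) induces a bijection between similarity classes of right regular general bilinear forms on M and the set of anti-endomorphisms of W. (2) If M is a generator, then for every anti-automorphism α of W the form b_α is both right and left regular with corresponding anti-endomorphism α; the corresponding anti-endomorphism of every right and left regular form on M is an anti-automorphism of W, and every such form is similar to b_{α(b)}. Consequently b ↦ α(b) induces a bijection between similarity classes of regular (i.e., right and left regular) general bilinear forms on M and the set of anti-automorphisms of W. -/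

import Mathlib

open MulOpposite TensorProduct Function

universe u v w v'

section Core

/-- An anti-endomorphism of a ring: additive, unital, reverses multiplication. -/
def IsAntiEndo {W : Type*} [Ring W] (α : W → W) : Prop :=
  (∀ u v : W, α (u + v) = α u + α v) ∧ α 1 = 1 ∧ ∀ u v : W, α (u * v) = α v * α u

/-- An anti-automorphism of a ring: a bijective anti-endomorphism. -/
def IsAntiAuto {W : Type*} [Ring W] (α : W → W) : Prop :=
  IsAntiEndo α ∧ Function.Bijective α

/-- An inner automorphism of a ring: conjugation by a unit. -/
def IsInnerAut {W : Type*} [Ring W] (φ : W → W) : Prop :=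
  ∃ u : Wˣ, ∀ w : W, φ w = ↑u * w * ↑u⁻¹

variable (R : Type u) [Ring R]

/-- A double `R`-module structure on the additive group `K`: two commuting
right `R`-module structures `m0` and `m1`. -/
structure DoubleModule (K : Type v) [AddCommGroup K] where
  m0 : K → R → K
  m1 : K → R → K
  m0_add_left : ∀ (k k' : K) (r : R), m0 (k + k') r = m0 k r + m0 k' r
  m0_add_right : ∀ (k : K) (r r' : R), m0 k (r + r') = m0 k r + m0 k r'
  m0_mul : ∀ (k : K) (r r' : R), m0 k (r * r') = m0 (m0 k r) r'
  m0_one : ∀ k : K, m0 k 1 = k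
  m1_add_left : ∀ (k k' : K) (r : R), m1 (k + k') r = m1 k r + m1 k' r
  m1_add_right : ∀ (k : K) (r r' : R), m1 k (r + r') = m1 k r + m1 k r'
  m1_mul : ∀ (k : K) (r r' : R), m1 k (r * r') = m1 (m1 k r) r'
  m1_one : ∀ k : K, m1 k 1 = k
  comm : ∀ (k : K) (a b : R), m1 (m0 k a) b = m0 (m1 k b) a

variable {R}

/-- A homomorphism of double `R`-modules. -/
def IsDoubleHom {K : Type v} {K' : Type w} [AddCommGroup K] [AddCommGroup K']
    (DK : DoubleModule R K) (DK' : DoubleModule R K') (f : K → K') : Prop :=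
  (∀ k k' : K, f (k + k') = f k + f k') ∧
  (∀ (k : K) (r : R), f (DK.m0 k r) = DK'.m0 (f k) r) ∧
  (∀ (k : K) (r : R), f (DK.m1 k r) = DK'.m1 (f k) r)

/-- An isomorphism of double `R`-modules. -/
def IsDoubleIso {K : Type v} {K' : Type w} [AddCommGroup K] [AddCommGroup K']
    (DK : DoubleModule R K) (DK' : DoubleModule R K') (f : K → K') : Prop :=
  IsDoubleHom DK DK' f ∧ Function.Bijective f

/-- An anti-automorphism of a double `R`-module: an additive bijection exchanging
the two module structures. -/
def IsDoubleAntiAuto {K : Type v} [AddCommGroup K] (DK : DoubleModule R K) (θ : K → K) : Prop :=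
  Function.Bijective θ ∧ (∀ k k' : K, θ (k + k') = θ k + θ k') ∧
  (∀ (k : K) (r : R), θ (DK.m0 k r) = DK.m1 (θ k) r) ∧
  (∀ (k : K) (r : R), θ (DK.m1 k r) = DK.m0 (θ k) r)

variable (R)

/-- A general bilinear form on a right `R`-module `M` (encoded as a module over `Rᵐᵒᵖ`)
with values in a double `R`-module `(K, DK)`. -/
structure GBF (M : Type v) [AddCommGroup M] [Module Rᵐᵒᵖ M]
    (K : Type w) [AddCommGroup K] (DK : DoubleModule R K) where
  b : M → M → K
  add_left : ∀ x x' y : M, b (x + x') y = b x y + b x' y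
  add_right : ∀ x y y' : M, b x (y + y') = b x y + b x y'
  smul_left : ∀ (x y : M) (r : R), b (op r • x) y = DK.m0 (b x y) r
  smul_right : ∀ (x y : M) (r : R), b x (op r • y) = DK.m1 (b x y) r

variable {R}

namespace GBF

variable {M : Type v} [AddCommGroup M] [Module Rᵐᵒᵖ M]
  {K : Type w} [AddCommGroup K] {DK : DoubleModule R K}

/-- The right adjoint of `β` is injective. -/
def RightInjective (β : GBF R M K DK) : Prop :=
  ∀ x x' : M, (∀ y : M, β.b y x = β.b y x') → x = x'

/-- The right adjoint of `β` is bijective onto `Hom_R(M, K₀)`. -/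
def RightRegular (β : GBF R M K DK) : Prop :=
  β.RightInjective ∧
  ∀ f : M → K, (∀ y y' : M, f (y + y') = f y + f y') →
    (∀ (y : M) (r : R), f (op r • y) = DK.m0 (f y) r) →
    ∃ x : M, ∀ y : M, f y = β.b y x

/-- The left adjoint of `β` is injective. -/
def LeftInjective (β : GBF R M K DK) : Prop :=
  ∀ x x' : M, (∀ y : M, β.b x y = β.b x' y) → x = x'

/-- The left adjoint of `β` is bijective onto `Hom_R(M, K₁)`. -/
def LeftRegular (β : GBF R M K DK) : Prop :=
  β.LeftInjective ∧
  ∀ f : M → K, (∀ y y' : M, f (y + y') = f y + f y') →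
    (∀ (y : M) (r : R), f (op r • y) = DK.m1 (f y) r) →
    ∃ x : M, ∀ y : M, f y = β.b x y

/-- `α` is an adjoint anti-endomorphism for `β`: `β(w x, y) = β(x, α(w) y)`. -/
def IsAdjoint (β : GBF R M K DK) (α : Module.End Rᵐᵒᵖ M → Module.End Rᵐᵒᵖ M) : Prop :=
  ∀ (w : Module.End Rᵐᵒᵖ M) (x y : M), β.b (w x) y = β.b x (α w y)

/-- Similarity of general bilinear forms on the same module. -/
def Similar {K' : Type v'} [AddCommGroup K'] {DK' : DoubleModule R K'}
    (β : GBF R M K DK) (β' : GBF R M K' DK') : Prop :=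
  ∃ f : K → K', IsDoubleIso DK DK' f ∧ ∀ x y : M, β'.b x y = f (β.b x y)

end GBF

section Kalpha

variable {M : Type v} [AddCommGroup M] [Module Rᵐᵒᵖ M]

/-- The subgroup of `M ⊗_ℤ M` generated by the elements `(w x) ⊗ y - x ⊗ (α w y)`. -/
def kalphaRel (α : Module.End Rᵐᵒᵖ M → Module.End Rᵐᵒᵖ M) : Submodule ℤ (M ⊗[ℤ] M) :=
  Submodule.span ℤ
    {z | ∃ (w : Module.End Rᵐᵒᵖ M) (x y : M), z = (w x) ⊗ₜ[ℤ] y - x ⊗ₜ[ℤ] (α w y)}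

/-- `K_α`, the quotient of `M ⊗_ℤ M` by the relations `(w x) ⊗ y = x ⊗ (α w y)`. -/
abbrev Kalpha (α : Module.End Rᵐᵒᵖ M → Module.End Rᵐᵒᵖ M) : Type _ :=
  (M ⊗[ℤ] M) ⧸ kalphaRel α

/-- The map `x ⊗ y ↦ (x·r) ⊗ y` on `M ⊗_ℤ M`. -/
noncomputable def smulLeftMap (r : R) : (M ⊗[ℤ] M) →ₗ[ℤ] (M ⊗[ℤ] M) :=
  TensorProduct.map ((DistribMulAction.toAddMonoidHom M (op r : Rᵐᵒᵖ)).toIntLinearMap)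
    LinearMap.id

/-- The map `x ⊗ y ↦ x ⊗ (y·r)` on `M ⊗_ℤ M`. -/
noncomputable def smulRightMap (r : R) : (M ⊗[ℤ] M) →ₗ[ℤ] (M ⊗[ℤ] M) :=
  TensorProduct.map LinearMap.id
    ((DistribMulAction.toAddMonoidHom M (op r : Rᵐᵒᵖ)).toIntLinearMap)

theorem kalphaRel_le_left (α : Module.End Rᵐᵒᵖ M → Module.End Rᵐᵒᵖ M) (r : R) :
    kalphaRel α ≤ (kalphaRel α).comap (smulLeftMap (M := M) r) := by
  rw [kalphaRel, Submodule.span_le]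
  rintro _ ⟨w, x, y, rfl⟩
  rw [SetLike.mem_coe, Submodule.mem_comap, map_sub]
  have h1 : smulLeftMap (M := M) r ((w x) ⊗ₜ[ℤ] y) = (w (op r • x)) ⊗ₜ[ℤ] y := by
    simp [smulLeftMap, map_smul]; rfl
  have h2 : smulLeftMap (M := M) r (x ⊗ₜ[ℤ] (α w y)) = (op r • x) ⊗ₜ[ℤ] (α w y) := by
    simp [smulLeftMap]; rfl
  rw [h1, h2]
  exact Submodule.subset_span ⟨w, op r • x, y, rfl⟩

theorem kalphaRel_le_right (α : Module.End Rᵐᵒᵖ M → Module.End Rᵐᵒᵖ M) (r : R) :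
    kalphaRel α ≤ (kalphaRel α).comap (smulRightMap (M := M) r) := by
  rw [kalphaRel, Submodule.span_le]
  rintro _ ⟨w, x, y, rfl⟩
  rw [SetLike.mem_coe, Submodule.mem_comap, map_sub]
  have h1 : smulRightMap (M := M) r ((w x) ⊗ₜ[ℤ] y) = (w x) ⊗ₜ[ℤ] (op r • y) := by
    simp [smulRightMap]; rfl
  have h2 : smulRightMap (M := M) r (x ⊗ₜ[ℤ] (α w y)) = x ⊗ₜ[ℤ] (α w (op r • y)) := by
    simp [smulRightMap, map_smul]; rfl
  rw [h1, h2]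
  exact Submodule.subset_span ⟨w, x, op r • y, rfl⟩

/-- The `m0`-action on `K_α`. -/
noncomputable def kSmul0 (α : Module.End Rᵐᵒᵖ M → Module.End Rᵐᵒᵖ M) (r : R) :
    Kalpha α →ₗ[ℤ] Kalpha α :=
  Submodule.mapQ _ _ (smulLeftMap r) (kalphaRel_le_left α r)

/-- The `m1`-action on `K_α`. -/
noncomputable def kSmul1 (α : Module.End Rᵐᵒᵖ M → Module.End Rᵐᵒᵖ M) (r : R) :
    Kalpha α →ₗ[ℤ] Kalpha α :=
  Submodule.mapQ _ _ (smulRightMap r) (kalphaRel_le_right α r)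

theorem kSmul0_mk (α : Module.End Rᵐᵒᵖ M → Module.End Rᵐᵒᵖ M) (r : R) (t : M ⊗[ℤ] M) :
    kSmul0 α r (Submodule.Quotient.mk t) = Submodule.Quotient.mk (smulLeftMap r t) := rfl

theorem kSmul1_mk (α : Module.End Rᵐᵒᵖ M → Module.End Rᵐᵒᵖ M) (r : R) (t : M ⊗[ℤ] M) :
    kSmul1 α r (Submodule.Quotient.mk t) = Submodule.Quotient.mk (smulRightMap r t) := rfl

/-- The double `R`-module structure on `K_α`. -/
noncomputable def KalphaDM (α : Module.End Rᵐᵒᵖ M → Module.End Rᵐᵒᵖ M) :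
    DoubleModule R (Kalpha α) where
  m0 k r := kSmul0 α r k
  m1 k r := kSmul1 α r k
  m0_add_left k k' r := map_add _ k k'
  m0_add_right := by
    intro k r r'
    try dsimp only
    induction k using Submodule.Quotient.induction_on with
    | _ t =>
      rw [kSmul0_mk, kSmul0_mk, kSmul0_mk, ← Submodule.Quotient.mk_add]
      congr 1
      induction t with
      | zero => simp
      | tmul x y =>
        show (op (r + r') • x) ⊗ₜ[ℤ] y = (op r • x) ⊗ₜ[ℤ] y + (op r' • x) ⊗ₜ[ℤ] y
        simp [op_add, add_smul, TensorProduct.add_tmul]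
      | add a b ha hb => rw [map_add, map_add, map_add, ha, hb]; abel
  m0_mul := by
    intro k r r'
    try dsimp only
    induction k using Submodule.Quotient.induction_on with
    | _ t =>
      rw [kSmul0_mk, kSmul0_mk, kSmul0_mk]
      congr 1
      induction t with
      | zero => simp
      | tmul x y =>
        show (op (r * r') • x) ⊗ₜ[ℤ] y = (op r' • op r • x) ⊗ₜ[ℤ] y
        simp [op_mul, mul_smul]
      | add a b ha hb => rw [map_add, map_add, map_add, ha, hb]
  m0_one := by
    intro k
    try dsimp only
    induction k using Submodule.Quotient.induction_on with
    | _ t =>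
      rw [kSmul0_mk]
      congr 1
      induction t with
      | zero => simp
      | tmul x y =>
        show (op (1 : R) • x) ⊗ₜ[ℤ] y = x ⊗ₜ[ℤ] y
        simp
      | add a b ha hb => rw [map_add, ha, hb]
  m1_add_left k k' r := map_add _ k k'
  m1_add_right := by
    intro k r r'
    try dsimp only
    induction k using Submodule.Quotient.induction_on with
    | _ t =>
      rw [kSmul1_mk, kSmul1_mk, kSmul1_mk, ← Submodule.Quotient.mk_add]
      congr 1
      induction t with
      | zero => simp
      | tmul x y =>
        show x ⊗ₜ[ℤ] (op (r + r') • y) = x ⊗ₜ[ℤ] (op r • y) + x ⊗ₜ[ℤ] (op r' • y)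
        simp [op_add, add_smul, TensorProduct.tmul_add]
      | add a b ha hb => rw [map_add, map_add, map_add, ha, hb]; abel
  m1_mul := by
    intro k r r'
    try dsimp only
    induction k using Submodule.Quotient.induction_on with
    | _ t =>
      rw [kSmul1_mk, kSmul1_mk, kSmul1_mk]
      congr 1
      induction t with
      | zero => simp
      | tmul x y =>
        show x ⊗ₜ[ℤ] (op (r * r') • y) = x ⊗ₜ[ℤ] (op r' • op r • y)
        simp [op_mul, mul_smul]
      | add a b ha hb => rw [map_add, map_add, map_add, ha, hb]
  m1_one := by
    intro k
    try dsimp only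
    induction k using Submodule.Quotient.induction_on with
    | _ t =>
      rw [kSmul1_mk]
      congr 1
      induction t with
      | zero => simp
      | tmul x y =>
        show x ⊗ₜ[ℤ] (op (1 : R) • y) = x ⊗ₜ[ℤ] y
        simp
      | add a b ha hb => rw [map_add, ha, hb]
  comm := by
    intro k a c
    try dsimp only
    induction k using Submodule.Quotient.induction_on with
    | _ t =>
      rw [kSmul0_mk, kSmul1_mk, kSmul1_mk, kSmul0_mk]
      congr 1
      induction t with
      | zero => simp
      | tmul x y => rfl
      | add p q hp hq => rw [map_add, map_add, map_add, map_add, hp, hq]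

/-- The universal general bilinear form `b_α : M × M → K_α`. -/
noncomputable def balpha (α : Module.End Rᵐᵒᵖ M → Module.End Rᵐᵒᵖ M) :
    GBF R M (Kalpha α) (KalphaDM α) where
  b x y := Submodule.Quotient.mk (x ⊗ₜ[ℤ] y)
  add_left x x' y := by
    try dsimp only
    rw [TensorProduct.add_tmul, Submodule.Quotient.mk_add]
  add_right x y y' := by
    try dsimp only
    rw [TensorProduct.tmul_add, Submodule.Quotient.mk_add]
  smul_left x y r := by
    show _ = kSmul0 α r (Submodule.Quotient.mk (x ⊗ₜ[ℤ] y))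
    rw [kSmul0_mk]
    congr 1
  smul_right x y r := by
    show _ = kSmul1 α r (Submodule.Quotient.mk (x ⊗ₜ[ℤ] y))
    rw [kSmul1_mk]
    congr 1

end Kalpha

end Core

/-- `M` is a generator of `Mod-R`: `R_R` is a direct summand of `Mⁿ` for some `n ∈ ℕ`. -/
def IsGenerator (R : Type u) [Ring R] (M : Type v) [AddCommGroup M] [Module Rᵐᵒᵖ M] : Prop :=
  ∃ (n : ℕ) (i : R →ₗ[Rᵐᵒᵖ] (Fin n → M)) (p : (Fin n → M) →ₗ[Rᵐᵒᵖ] R), ∀ r : R, p (i r) = r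

/-!
Write `x ⊗ y` for `b_α(x, y)` and `θ(x, q) = x · q(-)` for the rank-one endomorphisms of `M`
(`q ∈ Hom_R(M, R)`). The defining relation `θ(x, q) m ⊗ y = m ⊗ α(θ(x, q)) y` says that
`k •₀ q(m) = m ⊗ Z_q(k)` for the contraction `Z_q(x ⊗ y) = α(θ(x, q)) y` of `K_α`.
A dual basis `(u_t, ψ_t)` of a progenerator gives `∑ θ(u_t, ψ_t) = 1`, hence
`z = ∑ Z_{ψ_t}(u_t ⊗ z)`; generator data `∑ p_j(x_j) = 1` give `k = ∑ x_j ⊗ Z_{p_j}(k)`.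
Together with the formula for `k •₀ q(m)`, the first identity makes `b_α` right regular for every
anti-endomorphism `α`; the second makes the map `K_α → K` induced by a right regular form with
adjoint `α` injective, and right regularity makes it surjective.
For bijective `α` the second identity makes `b_α` left regular, and exchanging the factors
identifies `K_α` with `K_{α⁻¹}`, which turns left regularity of `b_{α⁻¹}` into right regularity
of `b_α`.
-/

open Module (Dual)

lemma Module.exists_sum_dual_smul_eq (R M : Type*) [Semiring R] [AddCommMonoid M] [Module R M]
    [Module.Finite R M] [Module.Projective R M] :
    ∃ (n : ℕ) (u : Fin n → M) (ψ : Fin n → Dual R M), ∀ x, ∑ t, ψ t x • u t = x := by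
  obtain ⟨n, f, g, -, -, hfg⟩ := Module.Finite.exists_comp_eq_id_of_projective R M
  refine ⟨n, fun t => f (Pi.single t 1), fun t => (LinearMap.proj t).comp g, fun x => ?_⟩
  simp only [LinearMap.comp_apply, LinearMap.proj_apply, ← map_smul, ← map_sum]
  conv_rhs => rw [← LinearMap.id_apply (R := R) x, ← hfg]
  rw [LinearMap.comp_apply]
  congr 1
  ext t
  simp [Finset.sum_apply, Pi.single_apply]

lemma IsGenerator.exists_sum_eq_one {R : Type*} [Ring R] {M : Type*} [AddCommGroup M]
    [Module Rᵐᵒᵖ M] (hM : IsGenerator R M) :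
    ∃ (n : ℕ) (x : Fin n → M) (p : Fin n → Dual Rᵐᵒᵖ M), ∑ j, p j (x j) = 1 := by
  obtain ⟨n, i, p, hpi⟩ := hM
  refine ⟨n, fun j => i 1 j,
    fun j => (opLinearEquiv Rᵐᵒᵖ).toLinearMap ∘ₗ p ∘ₗ LinearMap.single Rᵐᵒᵖ (fun _ => M) j, ?_⟩
  simp only [LinearMap.comp_apply, LinearEquiv.coe_coe, coe_opLinearEquiv, LinearMap.coe_single]
  rw [← Finset.op_sum, ← map_sum, Finset.univ_sum_single, hpi, op_one]

section AntiEndo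

variable {W : Type*} [Ring W] {α : W → W}

lemma IsAntiEndo.map_sum (hα : IsAntiEndo α) {ι : Type*} (s : Finset ι) (u : ι → W) :
    α (∑ i ∈ s, u i) = ∑ i ∈ s, α (u i) :=
  _root_.map_sum (AddMonoidHom.mk' α hα.1) u s

lemma IsAntiAuto.exists_inverse (hα : IsAntiAuto α) :
    ∃ α' : W → W, IsAntiAuto α' ∧ LeftInverse α' α ∧ RightInverse α' α := by
  obtain ⟨⟨hadd, hone, hmul⟩, hbij⟩ := hα
  let e := Equiv.ofBijective α hbij
  have hα' : ∀ u, α (e.symm u) = u := e.apply_symm_apply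
  refine ⟨e.symm, ⟨⟨fun u v => hbij.1 ?_, hbij.1 ?_, fun u v => hbij.1 ?_⟩, e.symm.bijective⟩,
    e.symm_apply_apply, hα'⟩
  · rw [hα', hadd, hα', hα']
  · rw [hα', hone]
  · rw [hα', hmul, hα', hα']

end AntiEndo

namespace DoubleModule

variable {R : Type*} [Ring R] {K : Type*} [AddCommGroup K] (DK : DoubleModule R K)

lemma m0_zero (r : R) : DK.m0 0 r = 0 :=
  (AddMonoidHom.mk' (DK.m0 · r) (DK.m0_add_left · · r)).map_zero

lemma m1_zero (r : R) : DK.m1 0 r = 0 :=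
  (AddMonoidHom.mk' (DK.m1 · r) (DK.m1_add_left · · r)).map_zero

lemma m0_sum_right {ι : Type*} (k : K) (s : Finset ι) (r : ι → R) :
    DK.m0 k (∑ i ∈ s, r i) = ∑ i ∈ s, DK.m0 k (r i) :=
  map_sum (AddMonoidHom.mk' (DK.m0 k) (DK.m0_add_right k)) r s

end DoubleModule

namespace GBF

variable {R : Type*} [Ring R] {M : Type*} [AddCommGroup M] [Module Rᵐᵒᵖ M]
  {K : Type*} [AddCommGroup K] {DK : DoubleModule R K}
  {K' : Type*} [AddCommGroup K'] {DK' : DoubleModule R K'}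
  {K'' : Type*} [AddCommGroup K''] {DK'' : DoubleModule R K''}
  {β : GBF R M K DK} {α : Module.End Rᵐᵒᵖ M → Module.End Rᵐᵒᵖ M}

lemma zero_right (x : M) : β.b x 0 = 0 :=
  (AddMonoidHom.mk' (β.b x) (β.add_right x)).map_zero

lemma sum_left {ι : Type*} (s : Finset ι) (x : ι → M) (y : M) :
    β.b (∑ i ∈ s, x i) y = ∑ i ∈ s, β.b (x i) y :=
  map_sum (AddMonoidHom.mk' (β.b · y) (β.add_left · · y)) x s

lemma sum_right {ι : Type*} (x : M) (s : Finset ι) (y : ι → M) :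
    β.b x (∑ i ∈ s, y i) = ∑ i ∈ s, β.b x (y i) :=
  map_sum (AddMonoidHom.mk' (β.b x) (β.add_right x)) y s

lemma Similar.symm {β' : GBF R M K' DK'} (h : β.Similar β') : β'.Similar β := by
  obtain ⟨f, ⟨⟨hadd, h0, h1⟩, hbij⟩, hf⟩ := h
  let e := Equiv.ofBijective f hbij
  have he : ∀ k, f (e.symm k) = k := e.apply_symm_apply
  refine ⟨e.symm, ⟨⟨fun k k' => hbij.1 ?_, fun k r => hbij.1 ?_, fun k r => hbij.1 ?_⟩,
    e.symm.bijective⟩, fun x y => hbij.1 ?_⟩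
  · rw [he, hadd, he, he]
  · rw [he, h0, he]
  · rw [he, h1, he]
  · rw [he, hf]

lemma Similar.trans {β' : GBF R M K' DK'} {β'' : GBF R M K'' DK''} (h : β.Similar β')
    (h' : β'.Similar β'') : β.Similar β'' := by
  obtain ⟨f, ⟨⟨fadd, f0, f1⟩, fbij⟩, hf⟩ := h
  obtain ⟨g, ⟨⟨gadd, g0, g1⟩, gbij⟩, hg⟩ := h'
  exact ⟨g ∘ f, ⟨⟨fun k k' => by simp only [comp_apply, fadd, gadd],
    fun k r => by simp only [comp_apply, f0, g0], fun k r => by simp only [comp_apply, f1, g1]⟩,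
    gbij.comp fbij⟩, fun x y => by rw [hg, hf, comp_apply]⟩

lemma Similar.isAdjoint {β' : GBF R M K' DK'} (h : β.Similar β') (hβ : β.IsAdjoint α) :
    β'.IsAdjoint α := by
  obtain ⟨f, -, hf⟩ := h
  intro w x y
  rw [hf, hf, hβ]

lemma RightRegular.exists_adjoint_end (hβ : β.RightRegular) (w : Module.End Rᵐᵒᵖ M) :
    ∃ w' : Module.End Rᵐᵒᵖ M, ∀ x y, β.b (w x) y = β.b x (w' y) := by
  obtain ⟨hinj, hsurj⟩ := hβ
  choose A hA using fun y => hsurj (fun x => β.b (w x) y)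
    (fun x x' => by rw [map_add, β.add_left]) (fun x r => by rw [map_smul, β.smul_left])
  refine ⟨⟨⟨A, fun y y' => hinj _ _ fun x => ?_⟩, fun c y => hinj _ _ fun x => ?_⟩,
    fun x y => hA y x⟩
  · rw [β.add_right, ← hA, ← hA, ← hA, β.add_right]
  · rw [RingHom.id_apply, ← op_unop c, β.smul_right, ← hA, ← hA, β.smul_right]

lemma LeftRegular.exists_adjoint_end (hβ : β.LeftRegular) (w : Module.End Rᵐᵒᵖ M) :
    ∃ w' : Module.End Rᵐᵒᵖ M, ∀ x y, β.b x (w y) = β.b (w' x) y := by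
  obtain ⟨hinj, hsurj⟩ := hβ
  choose A hA using fun x => hsurj (fun y => β.b x (w y))
    (fun y y' => by rw [map_add, β.add_right]) (fun y r => by rw [map_smul, β.smul_right])
  refine ⟨⟨⟨A, fun x x' => hinj _ _ fun y => ?_⟩, fun c x => hinj _ _ fun y => ?_⟩, hA⟩
  · rw [β.add_left, ← hA, ← hA, ← hA, β.add_left]
  · rw [RingHom.id_apply, ← op_unop c, β.smul_left, ← hA, ← hA, β.smul_left]

lemma RightRegular.exists_isAdjoint (hβ : β.RightRegular) : ∃ α, β.IsAdjoint α := by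
  choose α hα using hβ.exists_adjoint_end
  exact ⟨α, hα⟩

lemma IsAdjoint.isAntiEndo (hinj : β.RightInjective) (hβ : β.IsAdjoint α) : IsAntiEndo α := by
  refine ⟨fun u v => ?_, ?_, fun u v => ?_⟩ <;> ext y <;> refine hinj _ _ fun x => ?_
  · rw [← hβ, LinearMap.add_apply, LinearMap.add_apply, β.add_left, β.add_right, hβ, hβ]
  · rw [← hβ, Module.End.one_apply, Module.End.one_apply]
  · rw [← hβ, Module.End.mul_apply, Module.End.mul_apply, hβ, hβ]

lemma IsAdjoint.bijective (hr : β.RightRegular) (hl : β.LeftRegular) (hβ : β.IsAdjoint α) :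
    Bijective α := by
  refine ⟨fun u v huv => ?_, fun v => ?_⟩
  · ext x
    exact hl.1 _ _ fun y => by rw [hβ, huv, ← hβ]
  · obtain ⟨v', hv'⟩ := hl.exists_adjoint_end v
    refine ⟨v', ?_⟩
    ext y
    exact hr.1 _ _ fun x => by rw [← hβ, hv']

lemma LeftRegular.rightRegular_of_swap {β' : GBF R M K' DK'} (hβ' : β'.LeftRegular)
    (σ : K →+ K') (hσ : Injective σ) (hσm0 : ∀ k r, σ (DK.m0 k r) = DK'.m1 (σ k) r)
    (hσb : ∀ x y, σ (β.b x y) = β'.b y x) : β.RightRegular := by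
  refine ⟨fun x x' h => hβ'.1 _ _ fun y => by rw [← hσb, ← hσb, h], fun f hadd hm0 => ?_⟩
  obtain ⟨x, hx⟩ := hβ'.2 (σ ∘ f) (fun y y' => by simp only [comp_apply, hadd, map_add])
    (fun y r => by simp only [comp_apply, hm0, hσm0])
  exact ⟨x, fun y => hσ (by rw [hσb, ← hx, comp_apply])⟩

end GBF

section RankOne

variable {R : Type*} [Semiring R] {M : Type*} [AddCommMonoid M] [Module R M]

lemma LinearMap.smulRight_add (q : Dual R M) (x x' : M) :
    q.smulRight (x + x') = q.smulRight x + q.smulRight x' := by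
  ext m
  simp [smul_add]

lemma LinearMap.mul_smulRight (w : Module.End R M) (q : Dual R M) (x : M) :
    w * q.smulRight x = q.smulRight (w x) := by
  ext m
  simp

lemma sum_smulRight_apply {n : ℕ} {x : Fin n → M} {p : Fin n → Dual R M}
    (hxp : ∑ j, p j (x j) = 1) (z : M) : ∑ j, (p j).smulRight z (x j) = z := by
  simp only [LinearMap.smulRight_apply, ← Finset.sum_smul, hxp, one_smul]

lemma sum_smulRight_eq_one {m : ℕ} {u : Fin m → M} {ψ : Fin m → Dual R M}
    (hψ : ∀ x, ∑ t, ψ t x • u t = x) : ∑ t, (ψ t).smulRight (u t) = 1 := by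
  ext x
  simp [hψ]

end RankOne

namespace Kalpha

variable {R : Type*} [Ring R] {M : Type*} [AddCommGroup M] [Module Rᵐᵒᵖ M]
  {α : Module.End Rᵐᵒᵖ M → Module.End Rᵐᵒᵖ M}

@[elab_as_elim]
lemma induction_on {P : Kalpha α → Prop} (k : Kalpha α) (zero : P 0)
    (tmul : ∀ x y, P ((balpha α).b x y)) (add : ∀ k k', P k → P k' → P (k + k')) : P k := by
  induction k using Submodule.Quotient.induction_on with
  | _ t =>
    induction t with
    | zero => exact zero
    | tmul x y => exact tmul x y
    | add t t' ht ht' => exact add _ _ ht ht'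

lemma balpha_isAdjoint (α : Module.End Rᵐᵒᵖ M → Module.End Rᵐᵒᵖ M) :
    (balpha α).IsAdjoint α :=
  fun w x y => (Submodule.Quotient.eq _).mpr (Submodule.subset_span ⟨w, x, y, rfl⟩)

variable {N : Type*} [AddCommGroup N]

noncomputable def lift (α : Module.End Rᵐᵒᵖ M → Module.End Rᵐᵒᵖ M) (g : M → M → N)
    (add_left : ∀ x x' y, g (x + x') y = g x y + g x' y)
    (add_right : ∀ x y y', g x (y + y') = g x y + g x y')
    (rel : ∀ w x y, g (w x) y = g x (α w y)) : Kalpha α →ₗ[ℤ] N :=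
  (kalphaRel α).liftQ
    (TensorProduct.lift (LinearMap.mk₂ ℤ g add_left
      (fun n x y => (AddMonoidHom.mk' (g · y) (add_left · · y)).map_zsmul n x) add_right
      (fun n x y => (AddMonoidHom.mk' (g x) (add_right x)).map_zsmul n y))) <| by
    rw [kalphaRel, Submodule.span_le]
    rintro _ ⟨w, x, y, rfl⟩
    exact LinearMap.sub_mem_ker_iff.mpr (rel w x y)

lemma isDoubleHom_lift {K : Type*} [AddCommGroup K] {DK : DoubleModule R K}
    {β : GBF R M K DK} (hβ : β.IsAdjoint α) :
    IsDoubleHom (KalphaDM α) DK (lift α β.b β.add_left β.add_right hβ) := by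
  refine ⟨map_add _, fun k r => ?_, fun k r => ?_⟩
  · induction k using induction_on with
    | zero => rw [DoubleModule.m0_zero, map_zero, DoubleModule.m0_zero]
    | tmul x y =>
      rw [← (balpha α).smul_left]
      exact β.smul_left x y r
    | add k k' hk hk' => rw [(KalphaDM α).m0_add_left, map_add, map_add, hk, hk', DK.m0_add_left]
  · induction k using induction_on with
    | zero => rw [DoubleModule.m1_zero, map_zero, DoubleModule.m1_zero]
    | tmul x y =>
      rw [← (balpha α).smul_right]
      exact β.smul_right x y r
    | add k k' hk hk' => rw [(KalphaDM α).m1_add_left, map_add, map_add, hk, hk', DK.m1_add_left]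

noncomputable def contract (hα : IsAntiEndo α) (q : Dual Rᵐᵒᵖ M) : Kalpha α →ₗ[ℤ] M :=
  lift α (fun x y => α (q.smulRight x) y)
    (fun x x' y => by rw [LinearMap.smulRight_add, hα.1, LinearMap.add_apply])
    (fun x y y' => map_add _ y y')
    (fun w x y => by rw [← LinearMap.mul_smulRight, hα.2.2, Module.End.mul_apply])

lemma contract_balpha (hα : IsAntiEndo α) (q : Dual Rᵐᵒᵖ M) (x y : M) :
    contract hα q ((balpha α).b x y) = α (q.smulRight x) y :=
  rfl

lemma contract_m1 (hα : IsAntiEndo α) (q : Dual Rᵐᵒᵖ M) (k : Kalpha α) (r : R) :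
    contract hα q ((KalphaDM α).m1 k r) = op r • contract hα q k := by
  induction k using induction_on with
  | zero => rw [DoubleModule.m1_zero, map_zero, smul_zero]
  | tmul x y => rw [← (balpha α).smul_right, contract_balpha, contract_balpha, map_smul]
  | add k k' hk hk' => rw [(KalphaDM α).m1_add_left, map_add, map_add, hk, hk', smul_add]

lemma m0_eq_balpha_contract (hα : IsAntiEndo α) (q : Dual Rᵐᵒᵖ M) (k : Kalpha α) (m : M) :
    (KalphaDM α).m0 k (unop (q m)) = (balpha α).b m (contract hα q k) := by
  induction k using induction_on with
  | zero => rw [DoubleModule.m0_zero, map_zero, (balpha α).zero_right]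
  | tmul x y =>
    rw [← (balpha α).smul_left, op_unop, contract_balpha, ← balpha_isAdjoint]
    rfl
  | add k k' hk hk' => rw [(KalphaDM α).m0_add_left, map_add, hk, hk', (balpha α).add_right]

lemma sum_balpha_contract (hα : IsAntiEndo α) {n : ℕ} {x : Fin n → M}
    {p : Fin n → Dual Rᵐᵒᵖ M} (hxp : ∑ j, p j (x j) = 1) (k : Kalpha α) :
    ∑ j, (balpha α).b (x j) (contract hα (p j) k) = k := by
  induction k using induction_on with
  | zero => simp only [map_zero, (balpha α).zero_right, Finset.sum_const_zero]
  | tmul x' y =>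
    calc ∑ j, (balpha α).b (x j) (contract hα (p j) ((balpha α).b x' y))
        = ∑ j, (balpha α).b ((p j).smulRight x' (x j)) y :=
          Finset.sum_congr rfl fun j _ => (balpha_isAdjoint α _ _ _).symm
      _ = (balpha α).b x' y := by rw [← (balpha α).sum_left, sum_smulRight_apply hxp]
  | add k k' hk hk' => simp only [map_add, (balpha α).add_right, Finset.sum_add_distrib, hk, hk']

lemma sum_contract_balpha (hα : IsAntiEndo α) {m : ℕ} {u : Fin m → M}
    {ψ : Fin m → Dual Rᵐᵒᵖ M} (hψ : ∀ x, ∑ t, ψ t x • u t = x) (z : M) :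
    ∑ t, contract hα (ψ t) ((balpha α).b (u t) z) = z := by
  simp only [contract_balpha, ← LinearMap.sum_apply, ← hα.map_sum, sum_smulRight_eq_one hψ,
    hα.2.1, Module.End.one_apply]

variable {α' : Module.End Rᵐᵒᵖ M → Module.End Rᵐᵒᵖ M}

noncomputable def swap (h : LeftInverse α' α) : Kalpha α →ₗ[ℤ] Kalpha α' :=
  lift α (fun x y => (balpha α').b y x) (fun x x' y => (balpha α').add_right y x x')
    (fun x y y' => (balpha α').add_left y y' x)
    (fun w x y => by rw [balpha_isAdjoint α' (α w) y x, h w])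

lemma swap_balpha (h : LeftInverse α' α) (x y : M) :
    swap h ((balpha α).b x y) = (balpha α').b y x :=
  rfl

lemma swap_swap (h : LeftInverse α' α) (h' : LeftInverse α α') (k : Kalpha α) :
    swap h' (swap h k) = k := by
  induction k using induction_on with
  | zero => rw [map_zero, map_zero]
  | tmul x y => rfl
  | add k k' hk hk' => rw [map_add, map_add, hk, hk']

lemma swap_m0 (h : LeftInverse α' α) (k : Kalpha α) (r : R) :
    swap h ((KalphaDM α).m0 k r) = (KalphaDM α').m1 (swap h k) r := by
  induction k using induction_on with
  | zero => rw [DoubleModule.m0_zero, map_zero, DoubleModule.m1_zero]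
  | tmul x y => rw [← (balpha α).smul_left, swap_balpha, swap_balpha, (balpha α').smul_right]
  | add k k' hk hk' =>
    rw [(KalphaDM α).m0_add_left, map_add, map_add, hk, hk', (KalphaDM α').m1_add_left]

end Kalpha

section Regularity

open Kalpha

variable {R : Type*} [Ring R] {M : Type*} [AddCommGroup M] [Module Rᵐᵒᵖ M]
  {α : Module.End Rᵐᵒᵖ M → Module.End Rᵐᵒᵖ M}

theorem balpha_rightRegular_of_dualBasis (hα : IsAntiEndo α) {m : ℕ} {u : Fin m → M}
    {ψ : Fin m → Dual Rᵐᵒᵖ M} (hψ : ∀ x, ∑ t, ψ t x • u t = x) : (balpha α).RightRegular := by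
  refine ⟨fun z z' h => ?_, fun f hadd hm0 => ?_⟩
  · rw [← sum_contract_balpha hα hψ z, ← sum_contract_balpha hα hψ z']
    simp only [h]
  · refine ⟨∑ t, contract hα (ψ t) (f (u t)), fun x => ?_⟩
    have hf : f x = ∑ t, f (ψ t x • u t) := by
      conv_lhs => rw [← hψ x]
      exact map_sum (AddMonoidHom.mk' f hadd) _ _
    rw [hf, (balpha α).sum_right]
    refine Finset.sum_congr rfl fun t _ => ?_
    rw [← m0_eq_balpha_contract, ← hm0, op_unop]

variable {n : ℕ} {x : Fin n → M} {p : Fin n → Dual Rᵐᵒᵖ M}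

theorem balpha_leftRegular (hα : IsAntiAuto α) (hxp : ∑ j, p j (x j) = 1) :
    (balpha α).LeftRegular := by
  obtain ⟨hα, hinj, hsurj⟩ := hα
  refine ⟨fun z z' h => ?_, fun f hadd hm1 => ?_⟩
  · have hzz' : ∀ j, (p j).smulRight z = (p j).smulRight z' := fun j => hinj <| by
      ext y
      rw [← contract_balpha hα, ← contract_balpha hα, h]
    rw [← sum_smulRight_apply hxp z, ← sum_smulRight_apply hxp z']
    simp only [hzz']
  · choose w hw using fun j => hsurj
      ⟨⟨fun y => contract hα (p j) (f y), fun y y' => by rw [hadd, map_add]⟩,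
        fun c y => show contract hα (p j) (f (c • y)) = c • contract hα (p j) (f y) by
          rw [← op_unop c, hm1, contract_m1]⟩
    refine ⟨∑ j, w j (x j), fun y => ?_⟩
    rw [← sum_balpha_contract hα hxp (f y), (balpha α).sum_left]
    refine Finset.sum_congr rfl fun j _ => ?_
    rw [balpha_isAdjoint, hw]
    rfl

theorem balpha_rightRegular (hα : IsAntiAuto α) (hxp : ∑ j, p j (x j) = 1) :
    (balpha α).RightRegular := by
  obtain ⟨α', hα', hl, hr⟩ := hα.exists_inverse
  exact (balpha_leftRegular hα' hxp).rightRegular_of_swap (swap hl).toAddMonoidHom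
    (LeftInverse.injective (swap_swap hl hr)) (swap_m0 hl) (swap_balpha hl)

end Regularity

section Similarity

open Kalpha

variable {R : Type*} [Ring R] {M : Type*} [AddCommGroup M] [Module Rᵐᵒᵖ M]
  {K : Type*} [AddCommGroup K] {DK : DoubleModule R K}
  {α : Module.End Rᵐᵒᵖ M → Module.End Rᵐᵒᵖ M}
  {n : ℕ} {x : Fin n → M} {p : Fin n → Dual Rᵐᵒᵖ M}

theorem balpha_similar (hxp : ∑ j, p j (x j) = 1) {β : GBF R M K DK} (hβ : β.RightRegular)
    (hadj : β.IsAdjoint α) : (balpha α).Similar β := by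
  have hα := hadj.isAntiEndo hβ.1
  set F := lift α β.b β.add_left β.add_right hadj
  have hF : IsDoubleHom (KalphaDM α) DK F := isDoubleHom_lift hadj
  have hcontract : ∀ k j y, β.b y (contract hα (p j) k) = DK.m0 (F k) (unop (p j y)) :=
    fun k j y => by rw [← hF.2.1, m0_eq_balpha_contract hα]; rfl
  refine ⟨F, ⟨hF, fun k k' hkk' => ?_, fun k => ?_⟩, fun _ _ => rfl⟩
  · have hj : ∀ j, contract hα (p j) k = contract hα (p j) k' := fun j =>
      hβ.1 _ _ fun y => by rw [hcontract, hcontract, hkk']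
    rw [← sum_balpha_contract hα hxp k, ← sum_balpha_contract hα hxp k']
    simp only [hj]
  · choose z hz using fun j => hβ.2 (fun y => DK.m0 k (unop (p j y)))
      (fun y y' => by rw [map_add, unop_add, DK.m0_add_right])
      (fun y r => by rw [map_smul, smul_eq_mul, unop_mul, unop_op, DK.m0_mul])
    refine ⟨∑ j, (balpha α).b (x j) (z j), ?_⟩
    rw [map_sum]
    calc ∑ j, F ((balpha α).b (x j) (z j)) = ∑ j, DK.m0 k (unop (p j (x j))) :=
          Finset.sum_congr rfl fun j _ => (hz j (x j)).symm
      _ = k := by rw [← DK.m0_sum_right, ← Finset.unop_sum, hxp, unop_one, DK.m0_one]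

theorem similar_iff_exists_isAdjoint (hxp : ∑ j, p j (x j) = 1) {β : GBF R M K DK}
    {K' : Type*} [AddCommGroup K'] {DK' : DoubleModule R K'} {β' : GBF R M K' DK'}
    (hβ : β.RightRegular) (hβ' : β'.RightRegular) :
    β.Similar β' ↔ ∃ α, β.IsAdjoint α ∧ β'.IsAdjoint α := by
  refine ⟨fun h => ?_, fun ⟨α, hadj, hadj'⟩ => ?_⟩
  · obtain ⟨α, hadj⟩ := hβ.exists_isAdjoint
    exact ⟨α, hadj, h.isAdjoint hadj⟩
  · exact (balpha_similar hxp hβ hadj).symm.trans (balpha_similar hxp hβ' hadj')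

end Similarity

/-- The correspondence between bilinear forms (up to similarity) and
anti-endomorphisms of `End_R(M)`: (1) if `M` is a progenerator, `α ↦ b_α` and
`b ↦ α(b)` set up a bijection between similarity classes of right regular forms on `M`
and anti-endomorphisms of `W`; (2) if `M` is a generator, they set up a bijection
between similarity classes of (right and left) regular forms and anti-automorphisms. -/
theorem stmt_11 {R : Type u} [Ring R] {M : Type v} [AddCommGroup M] [Module Rᵐᵒᵖ M] :
    -- (1) the progenerator case
    (Module.Finite Rᵐᵒᵖ M → Module.Projective Rᵐᵒᵖ M → IsGenerator R M →
      (∀ α : Module.End Rᵐᵒᵖ M → Module.End Rᵐᵒᵖ M, IsAntiEndo α →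
        (balpha (M := M) α).RightRegular ∧ (balpha (M := M) α).IsAdjoint α) ∧
      (∀ (K : Type w) (iK : AddCommGroup K) (DK : DoubleModule R K) (β : GBF R M K DK),
        β.RightRegular → ∀ α : Module.End Rᵐᵒᵖ M → Module.End Rᵐᵒᵖ M, β.IsAdjoint α →
          IsAntiEndo α ∧ (balpha (M := M) α).Similar β) ∧
      (∀ (K : Type w) (iK : AddCommGroup K) (DK : DoubleModule R K) (β : GBF R M K DK)
          (K' : Type w) (iK' : AddCommGroup K') (DK' : DoubleModule R K')
          (β' : GBF R M K' DK'),
        β.RightRegular → β'.RightRegular →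
          (β.Similar β' ↔
            ∃ α : Module.End Rᵐᵒᵖ M → Module.End Rᵐᵒᵖ M, β.IsAdjoint α ∧ β'.IsAdjoint α))) ∧
    -- (2) the generator case
    (IsGenerator R M →
      (∀ α : Module.End Rᵐᵒᵖ M → Module.End Rᵐᵒᵖ M, IsAntiAuto α →
        (balpha (M := M) α).RightRegular ∧ (balpha (M := M) α).LeftRegular ∧
          (balpha (M := M) α).IsAdjoint α) ∧
      (∀ (K : Type w) (iK : AddCommGroup K) (DK : DoubleModule R K) (β : GBF R M K DK),
        β.RightRegular → β.LeftRegular →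
          ∀ α : Module.End Rᵐᵒᵖ M → Module.End Rᵐᵒᵖ M, β.IsAdjoint α →
            IsAntiAuto α ∧ (balpha (M := M) α).Similar β) ∧
      (∀ (K : Type w) (iK : AddCommGroup K) (DK : DoubleModule R K) (β : GBF R M K DK)
          (K' : Type w) (iK' : AddCommGroup K') (DK' : DoubleModule R K')
          (β' : GBF R M K' DK'),
        β.RightRegular → β.LeftRegular → β'.RightRegular → β'.LeftRegular →
          (β.Similar β' ↔
            ∃ α : Module.End Rᵐᵒᵖ M → Module.End Rᵐᵒᵖ M, β.IsAdjoint α ∧ β'.IsAdjoint α))) := by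
  refine ⟨fun hfin hproj hgen => ?_, fun hgen => ?_⟩
  · obtain ⟨n, x, p, hxp⟩ := hgen.exists_sum_eq_one
    obtain ⟨m, u, ψ, hψ⟩ := Module.exists_sum_dual_smul_eq Rᵐᵒᵖ M
    exact ⟨fun α hα => ⟨balpha_rightRegular_of_dualBasis hα hψ, Kalpha.balpha_isAdjoint α⟩,
      fun K _ DK β hβ α hadj => ⟨hadj.isAntiEndo hβ.1, balpha_similar hxp hβ hadj⟩,
      fun K _ DK β K' _ DK' β' hβ hβ' => similar_iff_exists_isAdjoint hxp hβ hβ'⟩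
  · obtain ⟨n, x, p, hxp⟩ := hgen.exists_sum_eq_one
    exact ⟨fun α hα => ⟨balpha_rightRegular hα hxp, balpha_leftRegular hα hxp,
        Kalpha.balpha_isAdjoint α⟩,
      fun K _ DK β hr hl α hadj =>
        ⟨⟨hadj.isAntiEndo hr.1, hadj.bijective hr hl⟩, balpha_similar hxp hr hadj⟩,
      fun K _ DK β K' _ DK' β' hr _ hr' _ => similar_iff_exists_isAdjoint hxp hr hr'⟩
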